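/- In the latent-variable model with homogeneous kernel K (i.e. K_i = K for all i) satisfying ν ≤ K(x,v,w) ≤ 1, for all 1 ≤ q ≤ n−1 and all ℓ ≥ 1: |log P(X_q | X_{q+1:n}) − log P(X_q | X_{q+1:n+ℓ})| ≤ ν^{-1}·∏_{k=q+1}^{n-1}(1−ν) = ν^{-1}(1−ν)^{n−1−q}. -/

import Mathlib

open MeasureTheory

/-- `betaAux π K x m i v` : conditional probability of observing `x i, …, x (i+m-1)`
given that the latent variable with index `i` equals `v`, in the model where the
latent variables are i.i.d. with law `π` and `P(X_i = y | V) = K i y V_i V_{i+1}`. -/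
noncomputable def betaAux {V 𝕏 : Type*} [MeasurableSpace V] (π : Measure V)
    (K : ℕ → 𝕏 → V → V → ℝ) (x : ℕ → 𝕏) : ℕ → ℕ → V → ℝ
  | 0, _, _ => 1
  | m + 1, i, v => ∫ w, K i (x i) v w * betaAux π K x m (i + 1) w ∂π

/-- Marginal likelihood `P(X_q = x_q, …, X_n = x_n)`. -/
noncomputable def margP {V 𝕏 : Type*} [MeasurableSpace V] (π : Measure V)
    (K : ℕ → 𝕏 → V → V → ℝ) (x : ℕ → 𝕏) (q n : ℕ) : ℝ :=
  ∫ v, betaAux π K x (n + 1 - q) q v ∂π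

/-- Conditional probability `P(X_q = x_q | X_{q+1:n} = x_{q+1:n})`. -/
noncomputable def condP {V 𝕏 : Type*} [MeasurableSpace V] (π : Measure V)
    (K : ℕ → 𝕏 → V → V → ℝ) (x : ℕ → 𝕏) (q n : ℕ) : ℝ :=
  margP π K x q n / margP π K x (q + 1) n

/-!
Write `β = betaAux π K x (N - q) (q + 1)` for the backward likelihood of `x (q+1), …, x N`. By
Fubini, `P(X_q | X_{q+1:N}) = ∫ g β / ∫ β`, where `g` is the image of `1` under the forward
operator `f ↦ ∫ f(v) K(x_q, v, ·) dπ(v)`. Pushing the forward operators of the first `n - 1 - q`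
observations through `β` in the same way, both integrals become `∫ G β'` and `∫ W β'`, where
`G`, `W` are the forward images of `g` and `1`, and only `β'` depends on `N`. Initially
`ν W ≤ G ≤ W`, and by Doeblin's argument every forward step with a kernel bounded below by `ν`
shrinks the interval `[L, U]` with `L W ≤ G ≤ U W` by the factor `1 - ν`. So the conditional
probabilities for `N = n` and `N = n + ℓ` lie in a common interval `[L, U] ⊆ [ν, 1]` of length
`(1 - ν) ^ (n - q)`, and `|log a - log b| ≤ (U - L) / L` on such an interval.
-/

open Set Function

section UnitValued

variable {α : Type*} [MeasurableSpace α]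

structure MeasurableUnitValued (f : α → ℝ) : Prop where
  measurable : Measurable f
  nonneg : ∀ a, 0 ≤ f a
  le_one : ∀ a, f a ≤ 1

namespace MeasurableUnitValued

variable {f g : α → ℝ}

lemma one : MeasurableUnitValued (fun _ : α => (1 : ℝ)) :=
  ⟨measurable_const, fun _ => zero_le_one, fun _ => le_rfl⟩

lemma mul (hf : MeasurableUnitValued f) (hg : MeasurableUnitValued g) :
    MeasurableUnitValued (fun a => f a * g a) :=
  ⟨hf.measurable.mul hg.measurable, fun a => mul_nonneg (hf.nonneg a) (hg.nonneg a),
    fun a => mul_le_one₀ (hf.le_one a) (hg.nonneg a) (hg.le_one a)⟩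

lemma comp {β : Type*} [MeasurableSpace β] (hf : MeasurableUnitValued f) {φ : β → α}
    (hφ : Measurable φ) : MeasurableUnitValued (f ∘ φ) :=
  ⟨hf.measurable.comp hφ, fun b => hf.nonneg (φ b), fun b => hf.le_one (φ b)⟩

lemma integrable (hf : MeasurableUnitValued f) (μ : Measure α) [IsFiniteMeasure μ] :
    Integrable f μ :=
  .of_mem_Icc 0 1 hf.measurable.aemeasurable (ae_of_all _ fun a => ⟨hf.nonneg a, hf.le_one a⟩)

lemma uncurry_swap {k : α → α → ℝ} (hk : MeasurableUnitValued (uncurry k)) :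
    MeasurableUnitValued (uncurry (swap k)) :=
  hk.comp measurable_swap

lemma curry_apply {k : α → α → ℝ} (hk : MeasurableUnitValued (uncurry k)) (a : α) :
    MeasurableUnitValued (k a) :=
  hk.comp measurable_prodMk_left

end MeasurableUnitValued

end UnitValued

lemma integral_sandwich {α : Type*} [MeasurableSpace α] {μ : Measure α} {G W : α → ℝ}
    {L U : ℝ} (hG : Integrable G μ) (hW : Integrable W μ)
    (h : ∀ a, L * W a ≤ G a ∧ G a ≤ U * W a) :
    L * ∫ a, W a ∂μ ≤ ∫ a, G a ∂μ ∧ ∫ a, G a ∂μ ≤ U * ∫ a, W a ∂μ := by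
  constructor
  · rw [← integral_const_mul]
    exact integral_mono (hW.const_mul L) hG fun a => (h a).1
  · rw [← integral_const_mul]
    exact integral_mono hG (hW.const_mul U) fun a => (h a).2

section KernelOp

variable {V : Type*} [MeasurableSpace V] {π : Measure V} {k : V → V → ℝ} {ν : ℝ}

noncomputable def kernelOp (π : Measure V) (k : V → V → ℝ) (f : V → ℝ) (v : V) : ℝ :=
  ∫ w, k v w * f w ∂π

lemma MeasurableUnitValued.kernelOp [IsProbabilityMeasure π] {f : V → ℝ}
    (hk : MeasurableUnitValued (uncurry k)) (hf : MeasurableUnitValued f) :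
    MeasurableUnitValued (kernelOp π k f) where
  measurable := (hk.mul (hf.comp measurable_snd)).measurable.stronglyMeasurable
    |>.integral_prod_right'.measurable
  nonneg v := integral_nonneg fun w => ((hk.curry_apply v).mul hf).nonneg w
  le_one v := by
    calc ∫ w, k v w * f w ∂π ≤ ∫ _, (1 : ℝ) ∂π :=
          integral_mono (((hk.curry_apply v).mul hf).integrable π) (integrable_const 1)
            ((hk.curry_apply v).mul hf).le_one
      _ = 1 := by simp

lemma integrable_kernel_mul {h : V → ℝ} (hk : MeasurableUnitValued (uncurry k))
    (hh : Integrable h π) (v : V) : Integrable (fun w => k v w * h w) π :=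
  hh.bdd_mul (hk.curry_apply v).measurable.aestronglyMeasurable
    (ae_of_all _ fun w => by
      rw [Real.norm_eq_abs, abs_le]
      exact ⟨by linarith [(hk.curry_apply v).nonneg w], (hk.curry_apply v).le_one w⟩)

lemma integral_kernel_mul_le {h : V → ℝ}
    (hk : MeasurableUnitValued (uncurry k)) (hh : Integrable h π) (h0 : ∀ w, 0 ≤ h w)
    (v : V) : ∫ w, k v w * h w ∂π ≤ ∫ w, h w ∂π :=
  integral_mono (integrable_kernel_mul hk hh v) hh fun w =>
    mul_le_of_le_one_left (h0 w) ((hk.curry_apply v).le_one w)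

lemma mul_integral_le_integral_kernel_mul {h : V → ℝ}
    (hk : MeasurableUnitValued (uncurry k)) (hkν : ∀ v w, ν ≤ k v w) (hh : Integrable h π)
    (h0 : ∀ w, 0 ≤ h w) (v : V) : ν * ∫ w, h w ∂π ≤ ∫ w, k v w * h w ∂π := by
  rw [← integral_const_mul]
  exact integral_mono (hh.const_mul ν) (integrable_kernel_mul hk hh v) fun w =>
    mul_le_mul_of_nonneg_right (hkν v w) (h0 w)

lemma integral_kernelOp_pos [IsProbabilityMeasure π] {f : V → ℝ}
    (hk : MeasurableUnitValued (uncurry k)) (hkν : ∀ v w, ν ≤ k v w) (hν : 0 < ν)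
    (hf : MeasurableUnitValued f) (hf0 : 0 < ∫ v, f v ∂π) :
    0 < ∫ v, kernelOp π k f v ∂π := by
  have hlow : ∀ v, ν * ∫ w, f w ∂π ≤ kernelOp π k f v := fun v =>
    mul_integral_le_integral_kernel_mul hk hkν (hf.integrable π) hf.nonneg v
  calc 0 < ∫ _, ν * ∫ w, f w ∂π ∂π := by simpa using mul_pos hν hf0
    _ ≤ ∫ v, kernelOp π k f v ∂π :=
      integral_mono (integrable_const _) ((hk.kernelOp hf).integrable π) hlow

lemma integral_mul_kernelOp [IsFiniteMeasure π] {f g : V → ℝ}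
    (hk : MeasurableUnitValued (uncurry k)) (hf : MeasurableUnitValued f)
    (hg : MeasurableUnitValued g) :
    ∫ v, f v * kernelOp π k g v ∂π = ∫ w, kernelOp π (swap k) f w * g w ∂π := by
  have hint : Integrable (uncurry fun v w => f v * (k v w * g w)) (π.prod π) :=
    ((hf.comp measurable_fst).mul (hk.mul (hg.comp measurable_snd))).integrable _
  calc ∫ v, f v * kernelOp π k g v ∂π = ∫ v, ∫ w, f v * (k v w * g w) ∂π ∂π := by
        simp only [kernelOp, integral_const_mul]
    _ = ∫ w, ∫ v, f v * (k v w * g w) ∂π ∂π := integral_integral_swap hint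
    _ = ∫ w, kernelOp π (swap k) f w * g w ∂π := by
        refine integral_congr_ae (ae_of_all _ fun w => ?_)
        simp only [kernelOp, ← integral_mul_const]
        congr 1 with v
        simp only [swap]
        ring

lemma integral_kernel_mul_sub [IsFiniteMeasure π] {F H : V → ℝ}
    (hk : MeasurableUnitValued (uncurry k)) (hF : MeasurableUnitValued F)
    (hH : MeasurableUnitValued H) (a b : ℝ) (v : V) :
    ∫ w, k v w * (a * F w - b * H w) ∂π = a * kernelOp π k F v - b * kernelOp π k H v := by
  have hint : ∀ {f} (c : ℝ), MeasurableUnitValued f → Integrable (fun w => c * (k v w * f w)) π :=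
    fun c hf => (((hk.curry_apply v).mul hf).integrable π).const_mul c
  simp only [kernelOp, ← integral_const_mul]
  rw [← integral_sub (hint a hF) (hint b hH)]
  congr 1 with w
  ring

lemma mul_integral_sub_le_kernelOp_sub [IsFiniteMeasure π] {F H : V → ℝ} {a b : ℝ}
    (hk : MeasurableUnitValued (uncurry k)) (hkν : ∀ v w, ν ≤ k v w)
    (hF : MeasurableUnitValued F) (hH : MeasurableUnitValued H) (hab : ∀ w, b * H w ≤ a * F w)
    (v : V) :
    ν * (a * ∫ w, F w ∂π - b * ∫ w, H w ∂π) ≤ a * kernelOp π k F v - b * kernelOp π k H v := by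
  have haF := (hF.integrable π).const_mul a
  have hbH := (hH.integrable π).const_mul b
  have hint : Integrable (fun w => a * F w - b * H w) π := haF.sub hbH
  have key := mul_integral_le_integral_kernel_mul hk hkν hint
    (fun w => sub_nonneg.2 (hab w)) v
  rwa [integral_kernel_mul_sub hk hF hH, integral_sub haF hbH, integral_const_mul,
    integral_const_mul] at key

/-- Doeblin's argument: the gaps `G - L W` and `U W - G` are nonnegative, so the minorization
`ν ≤ k` gives every point at least a fraction `ν` of their mass, while `kernelOp π k W ≤ ∫ W`.
Hence the bounds on the ratio move a fraction `ν` of the way towards `∫ G / ∫ W`. -/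
theorem exists_contracted_sandwich_kernelOp [IsFiniteMeasure π] {G W : V → ℝ} {L U : ℝ}
    (hk : MeasurableUnitValued (uncurry k)) (hkν : ∀ v w, ν ≤ k v w) (hν : 0 ≤ ν)
    (hG : MeasurableUnitValued G) (hW : MeasurableUnitValued W) (hW0 : 0 < ∫ v, W v ∂π)
    (h : ∀ v, L * W v ≤ G v ∧ G v ≤ U * W v) :
    ∃ L' U', L ≤ L' ∧ U' ≤ U ∧ U' - L' = (1 - ν) * (U - L) ∧
      ∀ v, L' * kernelOp π k W v ≤ kernelOp π k G v ∧
        kernelOp π k G v ≤ U' * kernelOp π k W v := by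
  obtain ⟨hLG, hGU⟩ := integral_sandwich (hG.integrable π) (hW.integrable π) h
  set c := (∫ v, G v ∂π) / ∫ v, W v ∂π
  have hcW : c * ∫ v, W v ∂π = ∫ v, G v ∂π := div_mul_cancel₀ _ hW0.ne'
  have hLc : 0 ≤ ν * (c - L) := mul_nonneg hν (sub_nonneg.2 ((le_div_iff₀ hW0).2 hLG))
  have hcU : 0 ≤ ν * (U - c) := mul_nonneg hν (sub_nonneg.2 ((div_le_iff₀ hW0).2 hGU))
  refine ⟨L + ν * (c - L), U - ν * (U - c), by linarith, by linarith, by ring, fun v => ?_⟩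
  have hTW : kernelOp π k W v ≤ ∫ w, W w ∂π :=
    integral_kernel_mul_le hk (hW.integrable π) hW.nonneg v
  have gapL := mul_integral_sub_le_kernelOp_sub (π := π) (a := 1) hk hkν hG hW
    (fun w => by simpa using (h w).1) v
  have gapU := mul_integral_sub_le_kernelOp_sub (π := π) (b := 1) hk hkν hW hG
    (fun w => by simpa using (h w).2) v
  constructor
  · linear_combination gapL + mul_le_mul_of_nonneg_left hTW hLc + ν * hcW
  · linear_combination gapU + mul_le_mul_of_nonneg_left hTW hcU - ν * hcW

end KernelOp

section Likelihood

variable {V 𝕏 : Type*} [MeasurableSpace V] {π : Measure V} {K : ℕ → 𝕏 → V → V → ℝ}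
  {x : ℕ → 𝕏} {ν : ℝ}

lemma betaAux_succ (m i : ℕ) :
    betaAux π K x (m + 1) i = kernelOp π (K i (x i)) (betaAux π K x m (i + 1)) :=
  rfl

lemma measurableUnitValued_betaAux [IsProbabilityMeasure π]
    (hK : ∀ i, MeasurableUnitValued (uncurry (K i (x i)))) (m i : ℕ) :
    MeasurableUnitValued (betaAux π K x m i) := by
  induction m generalizing i with
  | zero => exact .one
  | succ m ih => exact (hK i).kernelOp (ih (i + 1))

lemma integral_betaAux_pos [IsProbabilityMeasure π]
    (hK : ∀ i, MeasurableUnitValued (uncurry (K i (x i)))) (hKν : ∀ i v w, ν ≤ K i (x i) v w)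
    (hν : 0 < ν) (m i : ℕ) : 0 < ∫ v, betaAux π K x m i v ∂π := by
  induction m generalizing i with
  | zero => simp [betaAux]
  | succ m ih =>
    exact integral_kernelOp_pos (hK i) (hKν i) hν (measurableUnitValued_betaAux hK m (i + 1))
      (ih (i + 1))

lemma integral_mul_betaAux_succ [IsProbabilityMeasure π] {F : V → ℝ}
    (hK : ∀ i, MeasurableUnitValued (uncurry (K i (x i)))) (hF : MeasurableUnitValued F)
    (m i : ℕ) :
    ∫ v, F v * betaAux π K x (m + 1) i v ∂π =
      ∫ w, kernelOp π (swap (K i (x i))) F w * betaAux π K x m (i + 1) w ∂π :=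
  integral_mul_kernelOp (hK i) hF (measurableUnitValued_betaAux hK m (i + 1))

theorem exists_sandwich_integral_mul_betaAux [IsProbabilityMeasure π]
    (hK : ∀ i, MeasurableUnitValued (uncurry (K i (x i)))) (hKν : ∀ i v w, ν ≤ K i (x i) v w)
    (hν : 0 < ν) (k : ℕ) {i : ℕ} {G W : V → ℝ} {L U : ℝ} (hG : MeasurableUnitValued G)
    (hW : MeasurableUnitValued W) (hW0 : 0 < ∫ v, W v ∂π)
    (h : ∀ v, L * W v ≤ G v ∧ G v ≤ U * W v) :
    ∃ L' U', L ≤ L' ∧ U' ≤ U ∧ U' - L' = (1 - ν) ^ k * (U - L) ∧ ∀ m, k ≤ m →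
      L' * ∫ v, W v * betaAux π K x m i v ∂π ≤ ∫ v, G v * betaAux π K x m i v ∂π ∧
        ∫ v, G v * betaAux π K x m i v ∂π ≤ U' * ∫ v, W v * betaAux π K x m i v ∂π := by
  induction k generalizing i G W L U with
  | zero =>
    refine ⟨L, U, le_rfl, le_rfl, by simp, fun m _ => ?_⟩
    have hβ := measurableUnitValued_betaAux (π := π) hK m i
    refine integral_sandwich ((hG.mul hβ).integrable π) ((hW.mul hβ).integrable π) fun v => ?_
    rw [← mul_assoc, ← mul_assoc]
    exact ⟨mul_le_mul_of_nonneg_right (h v).1 (hβ.nonneg v),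
      mul_le_mul_of_nonneg_right (h v).2 (hβ.nonneg v)⟩
  | succ k ih =>
    have hKi := (hK i).uncurry_swap
    obtain ⟨L₁, U₁, hLL₁, hU₁U, hwidth₁, h₁⟩ :=
      exists_contracted_sandwich_kernelOp hKi (fun v w => hKν i w v) hν.le hG hW hW0 h
    obtain ⟨L', U', hL₁L', hU'U₁, hwidth, h'⟩ := ih (i := i + 1) (hKi.kernelOp hG)
      (hKi.kernelOp hW) (integral_kernelOp_pos hKi (fun v w => hKν i w v) hν hW hW0) h₁
    refine ⟨L', U', hLL₁.trans hL₁L', hU'U₁.trans hU₁U,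
      by rw [hwidth, hwidth₁, pow_succ]; ring, fun m hm => ?_⟩
    obtain ⟨m, rfl⟩ : ∃ m', m = m' + 1 := ⟨m - 1, by omega⟩
    rw [integral_mul_betaAux_succ hK hG, integral_mul_betaAux_succ hK hW]
    exact h' m (by omega)

lemma condP_eq_div [IsProbabilityMeasure π]
    (hK : ∀ i, MeasurableUnitValued (uncurry (K i (x i)))) {q N : ℕ} (hqN : q ≤ N) :
    condP π K x q N =
      (∫ w, kernelOp π (swap (K q (x q))) (fun _ => 1) w * betaAux π K x (N - q) (q + 1) w ∂π) /
        ∫ w, betaAux π K x (N - q) (q + 1) w ∂π := by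
  have h₁ : N + 1 - q = N - q + 1 := by omega
  have h₂ : N + 1 - (q + 1) = N - q := by omega
  rw [condP, margP, margP, h₁, h₂, ← integral_mul_betaAux_succ (π := π) hK .one]
  simp only [one_mul]

theorem exists_condP_mem_Icc [IsProbabilityMeasure π]
    (hK : ∀ i, MeasurableUnitValued (uncurry (K i (x i)))) (hKν : ∀ i v w, ν ≤ K i (x i) v w)
    (hν : 0 < ν) {q n : ℕ} (hqn : q ≤ n) :
    ∃ L U, ν ≤ L ∧ U - L = (1 - ν) ^ (n - 1 - q) * (1 - ν) ∧
      ∀ N, n ≤ N → condP π K x q N ∈ Icc L U := by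
  set g := kernelOp π (swap (K q (x q))) (fun _ => (1 : ℝ))
  have hg : MeasurableUnitValued g := (hK q).uncurry_swap.kernelOp .one
  have hνg : ∀ v, ν ≤ g v := fun v => by
    simpa [g, kernelOp] using mul_integral_le_integral_kernel_mul (hK q).uncurry_swap
      (fun v w => hKν q w v) (integrable_const (μ := π) (1 : ℝ)) (fun _ => zero_le_one) v
  obtain ⟨L, U, hνL, -, hwidth, hsand⟩ :=
    exists_sandwich_integral_mul_betaAux (π := π) hK hKν hν (n - 1 - q) (i := q + 1) hg .one
      (by simp) (fun v => ⟨by simpa using hνg v, by simpa using hg.le_one v⟩)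
  refine ⟨L, U, hνL, hwidth, fun N hN => ?_⟩
  have hβ := integral_betaAux_pos (π := π) hK hKν hν (N - q) (q + 1)
  obtain ⟨hL, hU⟩ := hsand (N - q) (by omega)
  simp only [one_mul] at hL hU
  rw [condP_eq_div hK (by omega)]
  exact ⟨(le_div_iff₀ hβ).2 hL, (div_le_iff₀ hβ).2 hU⟩

end Likelihood

lemma abs_log_sub_log_le {L U a b : ℝ} (hL : 0 < L) (ha : a ∈ Icc L U) (hb : b ∈ Icc L U) :
    |Real.log a - Real.log b| ≤ (U - L) / L := by
  have hU : 0 < U := hL.trans_le (ha.1.trans ha.2)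
  have hlog : ∀ y ∈ Icc L U, Real.log L ≤ Real.log y ∧ Real.log y ≤ Real.log U := fun y hy =>
    ⟨Real.log_le_log hL hy.1, Real.log_le_log (hL.trans_le hy.1) hy.2⟩
  obtain ⟨haL, haU⟩ := hlog a ha
  obtain ⟨hbL, hbU⟩ := hlog b hb
  have hratio : Real.log U - Real.log L ≤ (U - L) / L := by
    rw [← Real.log_div hU.ne' hL.ne']
    calc Real.log (U / L) ≤ U / L - 1 := Real.log_le_sub_one_of_pos (div_pos hU hL)
      _ = (U - L) / L := by field_simp
  rw [abs_le]
  constructor <;> linarith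

theorem condP_forgetting_general {V 𝕏 : Type*} [MeasurableSpace V]
    (π : Measure V) [IsProbabilityMeasure π]
    (K : 𝕏 → V → V → ℝ) (ν : ℝ)
    (hKmeas : ∀ y : 𝕏, Measurable fun p : V × V => K y p.1 p.2)
    (hν0 : 0 < ν) (hν1 : ν ≤ 1)
    (hKlb : ∀ (y : 𝕏) (v w : V), ν ≤ K y v w)
    (hKub : ∀ (y : 𝕏) (v w : V), K y v w ≤ 1)
    (x : ℕ → 𝕏) (q n ℓ : ℕ) (hqn : q + 1 ≤ n) :
    |Real.log (condP π (fun _ => K) x q n) - Real.log (condP π (fun _ => K) x q (n + ℓ))|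
      ≤ ν⁻¹ * (1 - ν) ^ (n - 1 - q) := by
  have hK : ∀ i, MeasurableUnitValued (uncurry (K (x i))) := fun i =>
    ⟨hKmeas (x i), fun p => hν0.le.trans (hKlb _ _ _), fun p => hKub _ _ _⟩
  obtain ⟨L, U, hνL, hwidth, hmem⟩ := exists_condP_mem_Icc (π := π) (K := fun _ => K) (x := x)
    hK (fun i => hKlb (x i)) hν0 (Nat.le_of_succ_le hqn)
  have h1ν : 0 ≤ 1 - ν := sub_nonneg.2 hν1
  have hwidth0 : 0 ≤ U - L := hwidth ▸ mul_nonneg (pow_nonneg h1ν _) h1ν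
  calc _ ≤ (U - L) / L :=
        abs_log_sub_log_le (hν0.trans_le hνL) (hmem n le_rfl) (hmem (n + ℓ) (by omega))
    _ ≤ (U - L) / ν := div_le_div_of_nonneg_left hwidth0 hν0 hνL
    _ ≤ ν⁻¹ * (1 - ν) ^ (n - 1 - q) := by
      rw [hwidth, div_eq_inv_mul]
      gcongr
      exact mul_le_of_le_one_right (pow_nonneg h1ν _) (by linarith)

theorem condP_forgetting {V 𝕏 : Type*} [MeasurableSpace V] [Countable 𝕏]
    (π : Measure V) [IsProbabilityMeasure π]
    (K : 𝕏 → V → V → ℝ) (ν : ℝ)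
    (hKmeas : ∀ y : 𝕏, Measurable fun p : V × V => K y p.1 p.2)
    (hKsum : ∀ v w : V, HasSum (fun y : 𝕏 => K y v w) 1)
    (hν0 : 0 < ν) (hν1 : ν ≤ 1)
    (hKlb : ∀ (y : 𝕏) (v w : V), ν ≤ K y v w)
    (hKub : ∀ (y : 𝕏) (v w : V), K y v w ≤ 1)
    (x : ℕ → 𝕏) (q n ℓ : ℕ) (hq : 1 ≤ q) (hqn : q + 1 ≤ n) (hℓ : 1 ≤ ℓ) :
    |Real.log (condP π (fun _ => K) x q n) - Real.log (condP π (fun _ => K) x q (n + ℓ))|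
      ≤ ν⁻¹ * (1 - ν) ^ (n - 1 - q) :=
  condP_forgetting_general π K ν hKmeas hν0 hν1 hKlb hKub x q n ℓ hqn
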